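/- Under the dominant-pole assumptions, for n → ∞ along n ∈ Λ_m = {n : n+λ ≡ m (mod σ)}, the sequence z₁^{−(n+λ−m)}·V_{n+λ}(z) converges (pointwise in z, indeed uniformly on compacts) to (z−z_{ν+1})···(z−z_λ)·ω_m(z). -/

import Mathlib

open Polynomial Finset Filter Topology

/-!
Write `N = n + λ - m`, a multiple of `σ` along `Λ_m`. Multiplying `V_{m+N}` by `z₁^{-N}` turns
each dominant term into `C_j z_j^m D_j` exactly, since `z_j^N = z₁^N` for `j ≤ ν`, and
`D_j = (z - z_{ν+1})⋯(z - z_λ) ∏_{i ≤ ν, i ≠ j} (z - z_i)` makes these terms add up to the limit.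
Each remaining term keeps a factor `(z_j / z₁)^N` with `|z_j / z₁| < 1`, which tends to `0`,
while its polynomial factor is bounded on compact sets.
-/

section UniformLimits

variable {ι X 𝕜 : Type*}

theorem tendstoUniformlyOn_mul_zero_of_tendsto_zero [SeminormedRing 𝕜] {l : Filter ι}
    {c : ι → 𝕜} (hc : Tendsto c l (𝓝 0)) {f : X → 𝕜} {K : Set X} {M : ℝ}
    (hf : ∀ x ∈ K, ‖f x‖ ≤ M) :
    TendstoUniformlyOn (fun n x => c n * f x) 0 l K := by
  rw [Metric.tendstoUniformlyOn_iff]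
  intro ε hε
  have hcM : Tendsto (fun n => ‖c n‖ * M) l (𝓝 0) := by
    simpa only [Function.comp_def, zero_mul] using (tendsto_norm_zero.comp hc).mul_const M
  filter_upwards [hcM.eventually_lt_const hε] with n hn x hx
  calc dist ((0 : X → 𝕜) x) (c n * f x) ≤ ‖c n‖ * ‖f x‖ := by
        simpa only [Pi.zero_apply, dist_zero_left] using norm_mul_le _ _
    _ ≤ ‖c n‖ * M := by gcongr; exact hf x hx
    _ < ε := hn

theorem tendstoUniformlyOn_finsetSum_zero {κ β : Type*} [AddCommGroup β] [UniformSpace β]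
    [IsUniformAddGroup β] {l : Filter ι} {K : Set X} {F : κ → ι → X → β} (t : Finset κ)
    (hF : ∀ j ∈ t, TendstoUniformlyOn (F j) 0 l K) :
    TendstoUniformlyOn (fun n x => ∑ j ∈ t, F j n x) 0 l K := by
  classical
  induction t using Finset.induction_on with
  | empty => exact tendsto_const_nhds.tendstoUniformlyOn_const K
  | insert a t ha ih =>
    simp only [sum_insert ha]
    have h := (hF a (mem_insert_self a t)).add (ih fun j hj => hF j (mem_insert_of_mem hj))
    rwa [add_zero] at h

theorem tendstoUniformlyOn_sum_pow_mul_zero [TopologicalSpace X] [SeminormedRing 𝕜]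
    {κ : Type*} {l : Filter ι} {N : ι → ℕ} (hN : Tendsto N l atTop) {K : Set X}
    (hK : IsCompact K) (t : Finset κ) {ρ : κ → 𝕜} (hρ : ∀ j ∈ t, ‖ρ j‖ < 1)
    {f : κ → X → 𝕜} (hf : ∀ j ∈ t, ContinuousOn (f j) K) :
    TendstoUniformlyOn (fun n x => ∑ j ∈ t, ρ j ^ N n * f j x) 0 l K := by
  refine tendstoUniformlyOn_finsetSum_zero t fun j hj => ?_
  obtain ⟨M, hM⟩ := hK.exists_bound_of_continuousOn (hf j hj)
  exact tendstoUniformlyOn_mul_zero_of_tendsto_zero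
    ((tendsto_pow_atTop_nhds_zero_of_norm_lt_one (hρ j hj)).comp hN) hM

end UniformLimits

section NodalSum

variable {ι F : Type*} [Fintype ι] [DecidableEq ι]

/-- The paper's `V_k` is `nodalSum univ z c k`, and `ω_m` is `nodalSum s z c m` for `s` the set
of dominant poles. -/
noncomputable def nodalSum [CommRing F] (s : Finset ι) (z c : ι → F) (k : ℕ) : F[X] :=
  ∑ j ∈ s, C (c j * z j ^ k) * ∏ i ∈ s.erase j, (X - C (z i))

theorem prod_univ_erase_eq_prod_compl_mul_prod_erase {M : Type*} [CommMonoid M]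
    (s : Finset ι) (f : ι → M) {j : ι} (hj : j ∈ s) :
    ∏ i ∈ univ.erase j, f i = (∏ i ∈ sᶜ, f i) * ∏ i ∈ s.erase j, f i := by
  rw [← prod_sdiff (erase_subset_erase j (subset_univ s))]
  congr 2
  ext i
  by_cases hij : i = j <;> simp [hij, hj]

theorem sum_C_mul_prod_univ_erase_eq [CommRing F] (s : Finset ι) (z c : ι → F) (k : ℕ) :
    ∑ j ∈ s, C (c j * z j ^ k) * ∏ i ∈ univ.erase j, (X - C (z i)) =
      (∏ i ∈ sᶜ, (X - C (z i))) * nodalSum s z c k := by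
  rw [nodalSum, mul_sum]
  refine sum_congr rfl fun j hj => ?_
  rw [prod_univ_erase_eq_prod_compl_mul_prod_erase s _ hj]
  ring

theorem eval_nodalSum_univ_pow_add [Field F] (s : Finset ι) (z c : ι → F) {z₀ : F}
    (hz₀ : z₀ ≠ 0) (m : ℕ) {N : ℕ} (hs : ∀ j ∈ s, z j ^ N = z₀ ^ N) (w : F) :
    z₀⁻¹ ^ N * (nodalSum univ z c (m + N)).eval w =
      (∏ i ∈ sᶜ, (w - z i)) * (nodalSum s z c m).eval w +
        ∑ j ∈ sᶜ, (z j * z₀⁻¹) ^ N * (c j * z j ^ m * ∏ i ∈ univ.erase j, (w - z i)) := by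
  have hterm : ∀ j ∈ s, z₀⁻¹ ^ N * (c j * z j ^ (m + N)) = c j * z j ^ m := by
    intro j hj
    rw [pow_add, hs j hj, inv_pow]
    field_simp [pow_ne_zero N hz₀]
  have hs' := congrArg (eval w) (sum_C_mul_prod_univ_erase_eq s z c m)
  simp only [eval_finsetSum, eval_mul, eval_C, eval_prod, eval_sub, eval_X] at hs'
  rw [← hs', nodalSum]
  simp only [eval_finsetSum, eval_mul, eval_C, eval_prod, eval_sub, eval_X]
  rw [mul_sum, ← sum_add_sum_compl s]
  congr 1
  · refine sum_congr rfl fun j hj => ?_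
    rw [← hterm j hj]
    ring
  · refine sum_congr rfl fun j _ => ?_
    rw [mul_pow, inv_pow, pow_add]
    ring

end NodalSum

theorem tendstoUniformlyOn_normalized_nodalSum {ι κ 𝕜 : Type*} [Fintype ι] [DecidableEq ι]
    [NormedField 𝕜] (s : Finset ι) (z c : ι → 𝕜) {z₀ : 𝕜} (hz₀ : z₀ ≠ 0) (m : ℕ)
    {l : Filter κ} {N : κ → ℕ} (hN : Tendsto N l atTop)
    (hdom : ∀ᶠ n in l, ∀ j ∈ s, z j ^ N n = z₀ ^ N n) (hsub : ∀ j ∉ s, ‖z j‖ < ‖z₀‖)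
    {K : Set 𝕜} (hK : IsCompact K) :
    TendstoUniformlyOn (fun n w => z₀⁻¹ ^ N n * (nodalSum univ z c (m + N n)).eval w)
      (fun w => (∏ i ∈ sᶜ, (w - z i)) * (nodalSum s z c m).eval w) l K := by
  have hratio : ∀ j ∈ sᶜ, ‖z j * z₀⁻¹‖ < 1 := fun j hj => by
    rw [norm_mul, norm_inv, ← div_eq_mul_inv, div_lt_one (norm_pos_iff.mpr hz₀)]
    exact hsub j (mem_compl.mp hj)
  have hrest := tendstoUniformlyOn_sum_pow_mul_zero hN hK sᶜ hratio
    (f := fun j w => c j * z j ^ m * ∏ i ∈ univ.erase j, (w - z i))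
    (fun j _ => by fun_prop)
  set g : 𝕜 → 𝕜 := fun w => (∏ i ∈ sᶜ, (w - z i)) * (nodalSum s z c m).eval w
  have hg : TendstoUniformlyOn (fun _ => g) g l K := fun u hu =>
    Eventually.of_forall fun _ _ _ => refl_mem_uniformity hu
  have h := hg.add hrest
  rw [add_zero] at h
  refine h.congr ?_
  filter_upwards [hdom] with n hn w _
  exact (eval_nodalSum_univ_pow_add s z c hz₀ m hn w).symm

/-- Along `Λ_m = {n : n+λ ≡ m (mod σ)}`, the normalized denominators
`z₁^{-(n+λ-m)} V_{n+λ}` converge to `(z-z_{ν+1})⋯(z-z_λ)·ω_m(z)`,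
pointwise and uniformly on compact sets. -/
theorem stmt5 (lam nu sig mm : ℕ) (hnul : nu + 1 < lam)
    (z Cc : Fin lam → ℂ)
    (hroot : ∀ j : Fin lam, (j : ℕ) < nu → z j ^ sig = z ⟨0, by omega⟩ ^ sig)
    (hdrop : ∀ j : Fin lam, nu ≤ (j : ℕ) →
      ‖z j‖ < ‖z ⟨0, by omega⟩‖) :
    let Dj : Fin lam → Polynomial ℂ :=
      fun j => ∏ i ∈ Finset.univ.erase j, (Polynomial.X - Polynomial.C (z i))
    let V : ℕ → Polynomial ℂ := fun k => ∑ j, Polynomial.C (Cc j * z j ^ k) * Dj j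
    let dom : Finset (Fin lam) := Finset.univ.filter (fun j => (j : ℕ) < nu)
    let ω : Polynomial ℂ := ∑ k ∈ dom, Polynomial.C (Cc k * z k ^ mm) *
      ∏ i ∈ dom.erase k, (Polynomial.X - Polynomial.C (z i))
    let Λ : Filter ℕ := atTop ⊓ Filter.principal {n | (n + lam) % sig = mm % sig}
    let g : ℂ → ℂ := fun w =>
      (∏ j ∈ Finset.univ.filter (fun j : Fin lam => nu ≤ (j : ℕ)), (w - z j)) * ω.eval w
    (∀ w : ℂ, Tendsto (fun n : ℕ =>
        (z ⟨0, by omega⟩)⁻¹ ^ (n + lam - mm) * (V (n + lam)).eval w) Λ (𝓝 (g w))) ∧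
    (∀ K : Set ℂ, IsCompact K → TendstoUniformlyOn (fun (n : ℕ) (w : ℂ) =>
        (z ⟨0, by omega⟩)⁻¹ ^ (n + lam - mm) * (V (n + lam)).eval w) g Λ K) := by
  intro Dj V dom ω Λ g
  set z₀ := z ⟨0, by omega⟩
  have hz₀ : z₀ ≠ 0 :=
    norm_pos_iff.mp ((norm_nonneg _).trans_lt (hdrop ⟨nu, by omega⟩ le_rfl))
  have hcompl : domᶜ = univ.filter (fun j : Fin lam => nu ≤ (j : ℕ)) := by
    ext j; simp [dom]
  have hΛ : ∀ᶠ n in Λ, mm ≤ n ∧ (n + lam) % sig = mm % sig :=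
    ((eventually_ge_atTop mm).filter_mono inf_le_left).and
      (mem_inf_of_right (mem_principal_self _))
  have hN : Tendsto (fun n => n + lam - mm) Λ atTop :=
    ((tendsto_sub_atTop_nat mm).comp (tendsto_add_atTop_nat lam)).mono_left inf_le_left
  have hdom : ∀ᶠ n in Λ, ∀ j ∈ dom, z j ^ (n + lam - mm) = z₀ ^ (n + lam - mm) := by
    filter_upwards [hΛ] with n ⟨_, hn⟩ j hj
    obtain ⟨t, ht⟩ := Nat.dvd_of_mod_eq_zero (Nat.sub_mod_eq_zero_of_mod_eq hn)
    rw [ht, pow_mul, pow_mul, hroot j (by simpa [dom] using hj)]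
  have hsub : ∀ j ∉ dom, ‖z j‖ < ‖z₀‖ := fun j hj => hdrop j (by simpa [dom] using hj)
  have hU : ∀ K : Set ℂ, IsCompact K → TendstoUniformlyOn
      (fun n w => z₀⁻¹ ^ (n + lam - mm) * (V (n + lam)).eval w) g Λ K := by
    intro K hK
    have h := tendstoUniformlyOn_normalized_nodalSum dom z Cc hz₀ mm hN hdom hsub hK
    rw [hcompl] at h
    refine h.congr ?_
    filter_upwards [hΛ] with n ⟨hn, _⟩ w _
    simp only [Nat.add_sub_cancel' (show mm ≤ n + lam by omega)]
    rfl
  exact ⟨fun w => (hU {w} isCompact_singleton).tendsto_at rfl, hU⟩
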